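/- arXiv:2410.12494 — 2 statements merged into one kernel-verified Lean document; each statement's English description precedes it below -/
import Mathlib

section
/- Let P be a finite poset with elements p₁,…,pₙ and let Q₁,…,Qₙ be finite posets. Then the product e(Q₁)·e(Q₂)⋯e(Qₙ) divides e(P(Q₁,…,Qₙ)), the number of linear extensions of the lexicographic sum. -/
open scoped Lex

/-- A finite poset is a chain if any two elements are comparable. -/
def IsChainPoset (R : Type*) [PartialOrder R] : Prop := ∀ x y : R, x ≤ y ∨ y ≤ x

/-- Linear extensions of a finite poset `R`: order-preserving bijective labelings
by `{1, …, |R|}` (here modeled by `Fin (card R)`). -/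
def LinExt (R : Type*) [PartialOrder R] [Fintype R] :=
  {f : R ≃ Fin (Fintype.card R) // ∀ x y : R, x < y → f x < f y}

/-- `e(R)`: the number of linear extensions of `R`. -/
noncomputable def numExt (R : Type*) [PartialOrder R] [Fintype R] : ℕ := Nat.card (LinExt R)

/-- The number of linear extensions of `R` placing `x` below `y`. -/
noncomputable def numBelow (R : Type*) [PartialOrder R] [Fintype R] (x y : R) : ℕ :=
  Nat.card {f : LinExt R // f.1 x < f.1 y}

/-- The number of linear extensions of `R` placing `a` below `b` and `c` below `d`. -/
noncomputable def numBelow2 (R : Type*) [PartialOrder R] [Fintype R] (a b c d : R) : ℕ :=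
  Nat.card {f : LinExt R // f.1 a < f.1 b ∧ f.1 c < f.1 d}

/-- `ℙ_R(x < y)`: the fraction of linear extensions of `R` placing `x` below `y`. -/
noncomputable def probBelow (R : Type*) [PartialOrder R] [Fintype R] (x y : R) : ℚ :=
  (numBelow R x y : ℚ) / (numExt R : ℚ)

/-- `δ(R) = max_{x ≠ y} min {ℙ_R(x<y), ℙ_R(y<x)}` (and `0` for chains / small posets). -/
noncomputable def delta (R : Type*) [PartialOrder R] [Fintype R] [DecidableEq R] : ℚ :=
  Finset.univ.fold max 0 (fun xy : R × R =>
    if xy.1 = xy.2 then 0 else min (probBelow R xy.1 xy.2) (probBelow R xy.2 xy.1))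

/-- The lexicographic sum `P ∘_i Q`: the poset obtained from `P` by replacing the
point `i` by the poset `Q`, elements of `Q` inheriting all comparabilities of `i`. -/
def LexAt (P : Type*) (i : P) (Q : Type*) := {p : P // p ≠ i} ⊕ Q

instance LexAt.instPartialOrder (P : Type*) [PartialOrder P] (i : P) (Q : Type*)
    [PartialOrder Q] : PartialOrder (LexAt P i Q) where
  le x y :=
    match x, y with
    | .inl a, .inl b => a.1 ≤ b.1
    | .inl a, .inr _ => a.1 < i
    | .inr _, .inl b => i < b.1
    | .inr q, .inr q' => q ≤ q'
  le_refl x := by cases x <;> exact le_refl _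
  le_trans x y z hxy hyz := by
    cases x <;> cases y <;> cases z <;>
    first
      | exact hxy
      | exact hyz
      | exact le_trans hxy hyz
      | exact lt_of_le_of_lt hxy hyz
      | exact lt_of_lt_of_le hxy hyz
      | exact le_of_lt (lt_trans hxy hyz)
      | exact absurd (lt_trans hxy hyz) (lt_irrefl i)
  le_antisymm x y hxy hyx := by
    cases x <;> cases y <;>
    first
      | exact congrArg Sum.inl (Subtype.ext (le_antisymm hxy hyx))
      | exact congrArg Sum.inr (le_antisymm hxy hyx)
      | exact absurd (lt_trans hxy hyx) (lt_irrefl i)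
      | exact absurd (lt_trans hyx hxy) (lt_irrefl i)

instance LexAt.instFintype (P : Type*) [Fintype P] [DecidableEq P] (i : P) (Q : Type*)
    [Fintype Q] : Fintype (LexAt P i Q) := inferInstanceAs (Fintype ({p : P // p ≠ i} ⊕ Q))

instance LexAt.instDecidableEq (P : Type*) [DecidableEq P] (i : P) (Q : Type*)
    [DecidableEq Q] : DecidableEq (LexAt P i Q) :=
  inferInstanceAs (DecidableEq ({p : P // p ≠ i} ⊕ Q))

instance sigmaLex.instFintype (ι : Type*) [Fintype ι] [DecidableEq ι] (Q : ι → Type*)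
    [∀ i, Fintype (Q i)] : Fintype (Σₗ i, Q i) := inferInstanceAs (Fintype (Σ i, Q i))

instance sigmaLex.instDecidableEq (ι : Type*) [DecidableEq ι] (Q : ι → Type*)
    [∀ i, DecidableEq (Q i)] : DecidableEq (Σₗ i, Q i) :=
  inferInstanceAs (DecidableEq (Σ i, Q i))

/- A linear extension `f` of `Σₗ p, Q p` restricts to a linear extension of every fibre `Q p`
(rank the fibre by the values of `f`). Conversely, the elements of a fibre may be reordered
arbitrarily inside the set of positions it occupies under `f`: this changes the restrictions to any
prescribed family `g` and nothing else. Hence `f ↦ (restrictions of f, f reordered to a fixed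
family g₀)` is a bijection onto `(∀ p, LinExt (Q p)) × {f | restrictions of f = g₀}`. -/

open Function

instance LinExt.instNonempty (R : Type*) [PartialOrder R] [Fintype R] : Nonempty (LinExt R) := by
  let : Fintype (LinearExtension R) := ‹Fintype R›
  let e : Fin (Fintype.card R) ≃o LinearExtension R := monoEquivOfFin _ rfl
  have hsm : StrictMono (toLinearExtension (α := R)) :=
    toLinearExtension.monotone.strictMono_of_injective fun _ _ h => h
  exact ⟨⟨(Equiv.refl R : R ≃ LinearExtension R).trans e.symm.toEquiv,
    fun _ _ hxy => e.symm.strictMono (hsm hxy)⟩⟩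

/-- A very well-behaved lens splits its source as a product. -/
def Equiv.prodFiberOfLens {α β : Type*} (get : α → β) (set : β → α → α)
    (get_set : ∀ b a, get (set b a) = b) (set_get : ∀ a, set (get a) a = a)
    (set_set : ∀ b b' a, set b (set b' a) = set b a) (b₀ : β) :
    α ≃ β × {a // get a = b₀} where
  toFun a := (get a, ⟨set b₀ a, get_set b₀ a⟩)
  invFun x := set x.1 x.2.1
  left_inv a := by simp only [set_set, set_get]
  right_inv := by
    rintro ⟨b, a, rfl⟩
    ext
    · exact get_set b a
    · simp only [set_set, set_get]

section Rank

variable {α β : Type*} [Fintype α] [LinearOrder β] (u : α → β) (hu : Injective u)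

noncomputable def rankEquiv : α ≃ Fin (Fintype.card α) :=
  letI := LinearOrder.lift' u hu
  (monoEquivOfFin α rfl).symm.toEquiv

theorem rankEquiv_lt_rankEquiv_iff {a b : α} : rankEquiv u hu a < rankEquiv u hu b ↔ u a < u b :=
  let := LinearOrder.lift' u hu
  (monoEquivOfFin α rfl).symm.lt_iff_lt

theorem eq_rankEquiv_of_lt_iff (e : α ≃ Fin (Fintype.card α))
    (he : ∀ a b, e a < e b ↔ u a < u b) : e = rankEquiv u hu := by
  let := LinearOrder.lift' u hu
  have hmono : StrictMono e := fun a b hab => (he a b).2 hab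
  ext a
  exact congrArg (fun f : α ≃o Fin (Fintype.card α) => (f a : ℕ))
    (Subsingleton.elim (hmono.orderIsoOfSurjective e e.surjective) (monoEquivOfFin α rfl).symm)

end Rank

namespace LinExt

variable {ι : Type*} [PartialOrder ι] [Fintype ι] [DecidableEq ι] {Q : ι → Type*}
  [∀ i, PartialOrder (Q i)] [∀ i, Fintype (Q i)]

noncomputable def restrict (f : LinExt (Σₗ i, Q i)) (i : ι) : LinExt (Q i) :=
  ⟨rankEquiv (fun q => f.1 (toLex ⟨i, q⟩)) fun _ _ h => sigma_mk_injective (f.1.injective h),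
    fun _ _ hab => (rankEquiv_lt_rankEquiv_iff _ _).2 (f.2 _ _ (Sigma.Lex.right _ _ hab))⟩

theorem restrict_lt_restrict_iff (f : LinExt (Σₗ i, Q i)) {i : ι} {a b : Q i} :
    (f.restrict i).1 a < (f.restrict i).1 b ↔ f.1 (toLex ⟨i, a⟩) < f.1 (toLex ⟨i, b⟩) :=
  rankEquiv_lt_rankEquiv_iff _ _

noncomputable def relabel (g : ∀ i, LinExt (Q i)) (f : LinExt (Σₗ i, Q i)) :
    LinExt (Σₗ i, Q i) :=
  ⟨(Equiv.sigmaCongrRight fun i => (g i).1.trans (f.restrict i).1.symm).trans f.1, by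
    rintro _ _ (⟨a, b, hij⟩ | @⟨i, a, b, hab⟩)
    · exact f.2 _ _ (Sigma.Lex.left _ _ hij)
    · refine (f.restrict_lt_restrict_iff).1 ?_
      simpa only [Equiv.trans_apply, Equiv.apply_symm_apply] using (g i).2 _ _ hab⟩

theorem relabel_apply (g : ∀ i, LinExt (Q i)) (f : LinExt (Σₗ i, Q i)) (i : ι) (q : Q i) :
    (relabel g f).1 (toLex ⟨i, q⟩) = f.1 (toLex ⟨i, (f.restrict i).1.symm ((g i).1 q)⟩) :=
  rfl

theorem restrict_relabel (g : ∀ i, LinExt (Q i)) (f : LinExt (Σₗ i, Q i)) :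
    (relabel g f).restrict = g := by
  funext i
  refine Subtype.ext (eq_rankEquiv_of_lt_iff _ _ _ fun a b => ?_).symm
  rw [relabel_apply, relabel_apply, ← restrict_lt_restrict_iff, Equiv.apply_symm_apply,
    Equiv.apply_symm_apply]

theorem relabel_restrict (f : LinExt (Σₗ i, Q i)) : relabel f.restrict f = f :=
  Subtype.ext <| Equiv.ext fun ⟨i, q⟩ =>
    congrArg (fun q => f.1 (toLex ⟨i, q⟩)) ((f.restrict i).1.symm_apply_apply q)

theorem relabel_relabel (g g' : ∀ i, LinExt (Q i)) (f : LinExt (Σₗ i, Q i)) :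
    relabel g (relabel g' f) = relabel g f := by
  refine Subtype.ext (Equiv.ext fun ⟨i, q⟩ => ?_)
  change (relabel g (relabel g' f)).1 (toLex ⟨i, q⟩) = (relabel g f).1 (toLex ⟨i, q⟩)
  rw [relabel_apply, restrict_relabel, relabel_apply, relabel_apply, Equiv.apply_symm_apply]

end LinExt

/-- `e(Q₁) ⋯ e(Qₙ)` divides `e(P(Q₁, …, Qₙ))`, where the lexicographic sum
`P(Q₁, …, Qₙ)` is modeled by the lexicographic order on `Σ p, Q p`. -/
theorem prod_numExt_dvd_numExt_lexSum (P : Type) [PartialOrder P] [Fintype P]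
    [DecidableEq P] (Q : P → Type) [∀ p, PartialOrder (Q p)] [∀ p, Fintype (Q p)] :
    (∏ p : P, numExt (Q p)) ∣ numExt (Σₗ p, Q p) := by
  obtain ⟨g₀⟩ : Nonempty (∀ p, LinExt (Q p)) := inferInstance
  let e := Equiv.prodFiberOfLens LinExt.restrict LinExt.relabel LinExt.restrict_relabel
    LinExt.relabel_restrict LinExt.relabel_relabel g₀
  rw [numExt, Nat.card_congr e, Nat.card_prod, Nat.card_pi]
  exact dvd_mul_right _ _
end

section
/- For finite posets P and Q that are not both empty, δ(P ⊔ Q) ≥ max{δ(P), δ(Q)}, where P ⊔ Q is the disjoint (parallel) union of P and Q. -/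
open scoped Lex

/-!
A linear extension of `P ⊔ Q` is the same thing as a choice of the `|P|` positions occupied by
`P` together with a linear extension of `P` and one of `Q`, the elements of each side being placed
in their positions in increasing order. Under this correspondence the relative order of two
elements of `P` is read off the linear extension of `P` alone, so `ℙ_{P ⊔ Q}(x < y) = ℙ_P(x < y)`
for `x, y ∈ P` (and likewise for `Q`). Every pair of `P` or `Q` is thus a pair of `P ⊔ Q` with the
same balance, and `δ` can only grow.
-/

section LinExt
variable (R : Type*) [PartialOrder R] [Fintype R]

instance LinExt.instFinite : Finite (LinExt R) := Subtype.finite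

lemma LinExt.nonempty : Nonempty (LinExt R) := by
  let _ : Fintype (LinearExtension R) := ‹Fintype R›
  let e : Fin (Fintype.card R) ≃o LinearExtension R := monoEquivOfFin (LinearExtension R) rfl
  exact ⟨⟨e.symm.toEquiv, fun x y hxy => e.symm.strictMono
    (lt_of_le_of_ne (toLinearExtension.monotone hxy.le) hxy.ne)⟩⟩

lemma numExt_pos : 0 < numExt R :=
  haveI := LinExt.nonempty R
  Nat.card_pos

end LinExt

section
variable (α β : Type*) [Fintype α] [Fintype β]

/-- The set of positions occupied by `α` in a bijection `α ⊕ β ≃ Fin |α ⊕ β|`. -/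
abbrev Shuffle := {S : Finset (Fin (Fintype.card (α ⊕ β))) // S.card = Fintype.card α}

variable {α β}

namespace Shuffle

lemma card_compl (S : Shuffle α β) : S.1ᶜ.card = Fintype.card β := by
  rw [Finset.card_compl, S.2, Fintype.card_fin, Fintype.card_sum]
  omega

def merge (S : Shuffle α β) (g : α ≃ Fin (Fintype.card α)) (h : β ≃ Fin (Fintype.card β)) :
    α ⊕ β → Fin (Fintype.card (α ⊕ β)) :=
  Sum.elim (S.1.orderEmbOfFin S.2 ∘ g) (S.1ᶜ.orderEmbOfFin S.card_compl ∘ h)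

variable (S : Shuffle α β) (g : α ≃ Fin (Fintype.card α)) (h : β ≃ Fin (Fintype.card β))

lemma merge_inl_lt_merge_inl_iff (x y : α) :
    S.merge g h (.inl x) < S.merge g h (.inl y) ↔ g x < g y :=
  (S.1.orderEmbOfFin S.2).lt_iff_lt

lemma merge_inr_lt_merge_inr_iff (x y : β) :
    S.merge g h (.inr x) < S.merge g h (.inr y) ↔ h x < h y :=
  (S.1ᶜ.orderEmbOfFin S.card_compl).lt_iff_lt

lemma range_merge_inl : Set.range (S.merge g h ∘ Sum.inl) = S.1 := by
  rw [merge, Sum.elim_comp_inl, EquivLike.range_comp, Finset.range_orderEmbOfFin]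

lemma merge_injective : Function.Injective (S.merge g h) := by
  have hmem : ∀ x y, S.merge g h (.inl x) ≠ S.merge g h (.inr y) := fun x y hxy =>
    Finset.mem_compl.1 (Finset.orderEmbOfFin_mem S.1ᶜ S.card_compl (h y))
      (by rw [← show S.1.orderEmbOfFin S.2 (g x) = S.1ᶜ.orderEmbOfFin S.card_compl (h y) from hxy]
          exact Finset.orderEmbOfFin_mem _ _ _)
  rintro (x | x) (y | y) hxy
  · exact congrArg Sum.inl (g.injective ((S.1.orderEmbOfFin S.2).injective hxy))
  · exact absurd hxy (hmem x y)
  · exact absurd hxy.symm (hmem y x)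
  · exact congrArg Sum.inr (h.injective ((S.1ᶜ.orderEmbOfFin S.card_compl).injective hxy))

noncomputable def mergeEquiv : α ⊕ β ≃ Fin (Fintype.card (α ⊕ β)) :=
  Equiv.ofBijective (S.merge g h)
    ((Fintype.bijective_iff_injective_and_card _).2 ⟨S.merge_injective g h, by simp⟩)

lemma merge_uncurry_injective :
    Function.Injective fun t : Shuffle α β × (α ≃ Fin (Fintype.card α)) ×
      (β ≃ Fin (Fintype.card β)) => t.1.merge t.2.1 t.2.2 := by
  rintro ⟨S, g, h⟩ ⟨S', g', h'⟩ hmerge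
  dsimp only at hmerge
  obtain rfl : S = S' := Subtype.ext <| Finset.coe_injective <| by
    rw [← range_merge_inl S g h, ← range_merge_inl S' g' h', hmerge]
  have hg : g = g' := Equiv.ext fun x =>
    (S.1.orderEmbOfFin S.2).injective (congrFun hmerge (.inl x))
  have hh : h = h' := Equiv.ext fun x =>
    (S.1ᶜ.orderEmbOfFin S.card_compl).injective (congrFun hmerge (.inr x))
  rw [hg, hh]

end Shuffle

noncomputable def shuffleEquiv :
    Shuffle α β × (α ≃ Fin (Fintype.card α)) × (β ≃ Fin (Fintype.card β)) ≃
      (α ⊕ β ≃ Fin (Fintype.card (α ⊕ β))) := by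
  classical
  refine Equiv.ofBijective (fun t => t.1.mergeEquiv t.2.1 t.2.2)
    ((Fintype.bijective_iff_injective_and_card _).2 ⟨fun t t' htt' =>
      Shuffle.merge_uncurry_injective (congrArg DFunLike.coe htt'), ?_⟩)
  -- `C(a + b, a) * a! * b! = (a + b)!`
  rw [Fintype.card_prod, Fintype.card_prod, Fintype.card_finset_len,
    Fintype.card_equiv (Fintype.equivFin _), Fintype.card_equiv (Fintype.equivFin _),
    Fintype.card_equiv (Fintype.equivFin _), Fintype.card_fin, Fintype.card_sum, ← mul_assoc,
    Nat.choose_symm_add, Nat.add_choose_mul_factorial_mul_factorial]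

end

lemma Nat.card_subtype_prod_snd {A B : Type*} (p : B → Prop) :
    Nat.card {t : A × B // p t.2} = Nat.card A * Nat.card {b // p b} := by
  rw [← Nat.card_prod]
  exact Nat.card_congr
    { toFun t := (t.1.1, ⟨t.1.2, t.2⟩)
      invFun t := ⟨(t.1, t.2.1), t.2.2⟩ }

section DisjointUnion
variable (P Q : Type*) [PartialOrder P] [Fintype P] [PartialOrder Q] [Fintype Q]

lemma Shuffle.strictMono_merge_iff (S : Shuffle P Q) (g : P ≃ Fin (Fintype.card P))
    (h : Q ≃ Fin (Fintype.card Q)) :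
    StrictMono (S.merge g h) ↔ StrictMono g ∧ StrictMono h := by
  refine ⟨fun hm => ⟨fun x y hxy => ?_, fun x y hxy => ?_⟩, ?_⟩
  · exact (S.merge_inl_lt_merge_inl_iff g h x y).1 (hm (Sum.inl_lt_inl_iff.2 hxy))
  · exact (S.merge_inr_lt_merge_inr_iff g h x y).1 (hm (Sum.inr_lt_inr_iff.2 hxy))
  · rintro ⟨hg, hh⟩ (x | x) (y | y) hxy
    · exact (S.merge_inl_lt_merge_inl_iff g h x y).2 (hg (Sum.inl_lt_inl_iff.1 hxy))
    · exact absurd hxy Sum.not_inl_lt_inr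
    · exact absurd hxy Sum.not_inr_lt_inl
    · exact (S.merge_inr_lt_merge_inr_iff g h x y).2 (hh (Sum.inr_lt_inr_iff.1 hxy))

lemma strictMono_shuffleEquiv_symm (f : P ⊕ Q ≃ Fin (Fintype.card (P ⊕ Q)))
    (hf : StrictMono f) :
    StrictMono (shuffleEquiv.symm f).2.1 ∧ StrictMono (shuffleEquiv.symm f).2.2 := by
  rw [← shuffleEquiv.apply_symm_apply f] at hf
  exact ((shuffleEquiv.symm f).1.strictMono_merge_iff P Q _ _).1 hf

noncomputable def linExtSumEquiv : Shuffle P Q × LinExt P × LinExt Q ≃ LinExt (P ⊕ Q) where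
  toFun t := ⟨t.1.mergeEquiv t.2.1.1 t.2.2.1,
    (t.1.strictMono_merge_iff P Q _ _).2 ⟨t.2.1.2, t.2.2.2⟩⟩
  invFun F :=
    have hlin := strictMono_shuffleEquiv_symm P Q F.1 F.2
    ((shuffleEquiv.symm F.1).1, ⟨_, hlin.1⟩, ⟨_, hlin.2⟩)
  left_inv t := by
    have e := shuffleEquiv.symm_apply_apply (t.1, t.2.1.1, t.2.2.1)
    exact Prod.ext (congrArg Prod.fst e :)
      (Prod.ext (Subtype.ext (congrArg (·.2.1) e :)) (Subtype.ext (congrArg (·.2.2) e :)))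
  right_inv F := Subtype.ext (shuffleEquiv.apply_symm_apply F.1)

lemma numExt_sum : numExt (P ⊕ Q) = Nat.card (Shuffle P Q) * (numExt P * numExt Q) := by
  rw [numExt, ← Nat.card_congr (linExtSumEquiv P Q), Nat.card_prod, Nat.card_prod, numExt, numExt]

lemma numBelow_sum_inl (x y : P) :
    numBelow (P ⊕ Q) (.inl x) (.inl y) =
      Nat.card (Shuffle P Q) * (numBelow P x y * numExt Q) := by
  rw [numBelow, ← Nat.card_congr ((linExtSumEquiv P Q).subtypeEquiv fun t =>
      (t.1.merge_inl_lt_merge_inl_iff t.2.1.1 t.2.2.1 x y).symm),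
    Nat.card_subtype_prod_snd (fun u : LinExt P × LinExt Q => u.1.1 x < u.1.1 y),
    Nat.card_congr (Equiv.prodSubtypeFstEquivSubtypeProd (β := LinExt Q)
      (p := fun g : LinExt P => g.1 x < g.1 y)), Nat.card_prod, numBelow, numExt]

lemma numBelow_sum_inr (x y : Q) :
    numBelow (P ⊕ Q) (.inr x) (.inr y) =
      Nat.card (Shuffle P Q) * (numExt P * numBelow Q x y) := by
  rw [numBelow, ← Nat.card_congr ((linExtSumEquiv P Q).subtypeEquiv fun t =>
      (t.1.merge_inr_lt_merge_inr_iff t.2.1.1 t.2.2.1 x y).symm),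
    Nat.card_subtype_prod_snd (fun u : LinExt P × LinExt Q => u.2.1 x < u.2.1 y),
    Nat.card_subtype_prod_snd (A := LinExt P) (fun g : LinExt Q => g.1 x < g.1 y), numBelow,
    numExt]

lemma card_shuffle_ne_zero : Nat.card (Shuffle P Q) ≠ 0 :=
  left_ne_zero_of_mul (numExt_sum P Q ▸ numExt_pos (P ⊕ Q)).ne'

lemma probBelow_sum_inl (x y : P) :
    probBelow (P ⊕ Q) (.inl x) (.inl y) = probBelow P x y := by
  rw [probBelow, probBelow, numBelow_sum_inl, numExt_sum]
  push_cast
  rw [mul_div_mul_left _ _ (mod_cast card_shuffle_ne_zero P Q),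
    mul_div_mul_right _ _ (mod_cast (numExt_pos Q).ne')]

lemma probBelow_sum_inr (x y : Q) :
    probBelow (P ⊕ Q) (.inr x) (.inr y) = probBelow Q x y := by
  rw [probBelow, probBelow, numBelow_sum_inr, numExt_sum]
  push_cast
  rw [mul_div_mul_left _ _ (mod_cast card_shuffle_ne_zero P Q),
    mul_div_mul_left _ _ (mod_cast (numExt_pos P).ne')]

end DisjointUnion

section Delta
variable {R S : Type*} [PartialOrder R] [Fintype R] [DecidableEq R]
  [PartialOrder S] [Fintype S] [DecidableEq S]

lemma delta_nonneg : 0 ≤ delta R :=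
  (Finset.le_fold_max _).2 (Or.inl le_rfl)

lemma min_probBelow_le_delta {a b : R} (hab : a ≠ b) :
    min (probBelow R a b) (probBelow R b a) ≤ delta R :=
  (Finset.le_fold_max _).2 (Or.inr ⟨(a, b), Finset.mem_univ _, by simp [hab]⟩)

lemma delta_le_delta_of_embedding (f : R ↪ S)
    (hf : ∀ a b, probBelow S (f a) (f b) = probBelow R a b) : delta R ≤ delta S := by
  rw [delta, Finset.fold_max_le]
  refine ⟨delta_nonneg, fun ⟨a, b⟩ _ => ?_⟩
  dsimp only
  split_ifs with hab
  · exact delta_nonneg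
  · rw [← hf, ← hf]
    exact min_probBelow_le_delta (f.injective.ne hab)

end Delta

theorem delta_disjointUnion_ge_general (P Q : Type) [PartialOrder P] [Fintype P] [DecidableEq P]
    [PartialOrder Q] [Fintype Q] [DecidableEq Q] :
    max (delta P) (delta Q) ≤ delta (P ⊕ Q) :=
  max_le (delta_le_delta_of_embedding .inl (probBelow_sum_inl P Q))
    (delta_le_delta_of_embedding .inr (probBelow_sum_inr P Q))

/-- for the disjoint (parallel) union, `δ(P ⊔ Q) ≥ max {δ(P), δ(Q)}`,
provided `P` and `Q` are not both empty. -/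
theorem delta_disjointUnion_ge (P Q : Type) [PartialOrder P] [Fintype P] [DecidableEq P]
    [PartialOrder Q] [Fintype Q] [DecidableEq Q] (h : Nonempty P ∨ Nonempty Q) :
    max (delta P) (delta Q) ≤ delta (P ⊕ Q) :=
  delta_disjointUnion_ge_general P Q
end
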